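/- Let G be a group and let C be a subgroup of finite index m in [G, G^φ] ≤ ν(G). Then for every b ∈ [G, G^φ], the coset Cb contains an element h that can be written as a product of at most m − 1 tensors (i.e. l⊗(h) ≤ m − 1, with the convention that the identity is a product of 0 tensors). -/

import Mathlib

namespace TensorNu

universe u

/-- The commutator `[x,y] = x⁻¹y⁻¹xy`. -/
def comm {K : Type*} [Group K] (x y : K) : K := x⁻¹ * y⁻¹ * x * y

/-- Conjugation `x^y = y⁻¹xy`. -/
def conj {K : Type*} [Group K] (x y : K) : K := y⁻¹ * x * y

variable (G : Type u) [Group G]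

/-- The defining relators of `ν(G)`, as elements of the free group on `G ⊕ G`,
where `Sum.inl` corresponds to the canonical copy of `G` and `Sum.inr` to the
isomorphic copy `G^φ` (`g ↦ g^φ`).  They comprise the multiplication tables of
`G` and of `G^φ`, together with the relations
`[g₁,g₂^φ]^{g₃} = [g₁^{g₃},(g₂^{g₃})^φ]` and `[g₁,g₂^φ]^{g₃} = [g₁,g₂^φ]^{g₃^φ}`. -/
def nuRels : Set (FreeGroup (G ⊕ G)) :=
  {r | (∃ g h : G, r = FreeGroup.of (Sum.inl g) * FreeGroup.of (Sum.inl h) *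
          (FreeGroup.of (Sum.inl (g * h)))⁻¹)
     ∨ (∃ g h : G, r = FreeGroup.of (Sum.inr g) * FreeGroup.of (Sum.inr h) *
          (FreeGroup.of (Sum.inr (g * h)))⁻¹)
     ∨ (∃ g₁ g₂ g₃ : G, r =
          conj (comm (FreeGroup.of (Sum.inl g₁)) (FreeGroup.of (Sum.inr g₂)))
              (FreeGroup.of (Sum.inl g₃)) *
            (comm (FreeGroup.of (Sum.inl (conj g₁ g₃)))
              (FreeGroup.of (Sum.inr (conj g₂ g₃))))⁻¹)
     ∨ (∃ g₁ g₂ g₃ : G, r =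
          conj (comm (FreeGroup.of (Sum.inl g₁)) (FreeGroup.of (Sum.inr g₂)))
              (FreeGroup.of (Sum.inl g₃)) *
            (conj (comm (FreeGroup.of (Sum.inl g₁)) (FreeGroup.of (Sum.inr g₂)))
              (FreeGroup.of (Sum.inr g₃)))⁻¹)}

/-- The group `ν(G)`. -/
abbrev Nu := PresentedGroup (nuRels G)

/-- The canonical image of `g ∈ G` in `ν(G)`. -/
def ι (g : G) : Nu G := PresentedGroup.of (Sum.inl g)

/-- The canonical image `g^φ` of `g ∈ G` (via the copy `G^φ`) in `ν(G)`. -/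
def ιφ (g : G) : Nu G := PresentedGroup.of (Sum.inr g)

/-- The set `T⊗(G)` of tensors `[a, b^φ]`, `a, b ∈ G`. -/
def tensorSet : Set (Nu G) := {x | ∃ a b : G, x = comm (ι G a) (ιφ G b)}

/-- The image of `G` in `ν(G)` as a subgroup. -/
def GSub : Subgroup (Nu G) := Subgroup.closure (Set.range (ι G))

/-- The image of `G^φ` in `ν(G)` as a subgroup. -/
def GφSub : Subgroup (Nu G) := Subgroup.closure (Set.range (ιφ G))

/-- The non-abelian tensor square `[G, G^φ] ≤ ν(G)`. -/
def tensorSquare : Subgroup (Nu G) := ⁅GSub G, GφSub G⁆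

/-- `[S, x]`: the subgroup generated by the commutators `[s, x]`, `s ∈ S`. -/
def commSub {K : Type*} [Group K] (S : Set K) (x : K) : Subgroup K :=
  Subgroup.closure {c | ∃ s ∈ S, c = comm s x}

end TensorNu

/-!
The tensors are closed under inversion and under conjugation by all of `ν(G)` (for conjugation by
`g` and `g^φ` this is a defining relation), so they generate a normal subgroup; it contains the
commutators of the generators of `G` and `G^φ`, hence all of `[G, G^φ]`, and every element of
`[G, G^φ]` is a product of tensors. Take such a product `t₁ ⋯ tₖ` in the coset `Cb`. If `k ≥ m`,
two of the `m + 1` cosets `C (t₁ ⋯ tᵢ)`, `0 ≤ i ≤ k`, coincide, and deleting the tensors between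
them gives a shorter product in the same coset `Cb`.
-/

open scoped commutatorElement

namespace Subgroup

variable {H : Type*} [Group H]

theorem commutator_closure_le_of_forall {s t : Set H} {N : Subgroup H} [N.Normal]
    (h : ∀ x ∈ s, ∀ y ∈ t, ⁅x, y⁆ ∈ N) : ⁅closure s, closure t⁆ ≤ N := by
  rw [← QuotientGroup.ker_mk' N, ← map_eq_bot_iff, map_commutator, MonoidHom.map_closure,
    MonoidHom.map_closure, commutator_eq_bot_iff_le_centralizer, centralizer_closure, closure_le]
  rintro _ ⟨x, hx, rfl⟩ _ ⟨y, hy, rfl⟩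
  rw [eq_comm, ← commutatorElement_eq_one_iff_mul_comm, ← map_commutatorElement,
    QuotientGroup.mk'_apply, QuotientGroup.eq_one_iff]
  exact h x hx y hy

variable {C K : Subgroup H}

theorem exists_shorter_prod_mul_inv_mem_of_relIndex_le (hCK : C.relIndex K ≠ 0) {l : List H}
    (hl : ∀ x ∈ l, x ∈ K) (hlen : C.relIndex K ≤ l.length) :
    ∃ l' ⊆ l, l'.length < l.length ∧ l'.prod * l.prod⁻¹ ∈ C := by
  have hprefix (i : ℕ) : (l.take i).prod⁻¹ ∈ K :=
    inv_mem (list_prod_mem fun x hx => hl x (List.mem_of_mem_take hx))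
  -- the left coset of `p⁻¹` stands for the right coset `C p` of the prefix product `p`
  let coset (i : Fin (l.length + 1)) : K ⧸ C.subgroupOf K :=
    QuotientGroup.mk ⟨(l.take i).prod⁻¹, hprefix i⟩
  have : Finite (K ⧸ C.subgroupOf K) := Nat.finite_of_card_ne_zero hCK
  have hcut {i j : ℕ} (hij : i < j) (hj : j ≤ l.length)
      (hC : (l.take i).prod * (l.take j).prod⁻¹ ∈ C) :
      ∃ l' ⊆ l, l'.length < l.length ∧ l'.prod * l.prod⁻¹ ∈ C := by
    refine ⟨l.take i ++ l.drop j, fun x hx => ?_, ?_, ?_⟩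
    · rcases List.mem_append.1 hx with hx | hx
      exacts [List.mem_of_mem_take hx, List.mem_of_mem_drop hx]
    · simp only [List.length_append, List.length_take, List.length_drop]
      omega
    · rwa [← List.prod_take_mul_prod_drop l j, List.prod_append, mul_inv_rev, mul_assoc,
        mul_inv_cancel_left]
  obtain ⟨i, j, hij, hne⟩ : ∃ i j, coset i = coset j ∧ i ≠ j :=
    Function.not_injective_iff.1 fun hinj => (Nat.card_le_card_of_injective coset hinj).not_gt
      (by simpa [relIndex, index] using hlen)
  rw [QuotientGroup.eq, mem_subgroupOf] at hij
  simp only [InvMemClass.coe_inv, inv_inv, coe_mul] at hij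
  rcases Fin.lt_or_lt_of_ne hne with h | h
  · exact hcut h (Nat.le_of_lt_succ j.2) hij
  · exact hcut h (Nat.le_of_lt_succ i.2) (by simpa using inv_mem hij)

theorem exists_subset_length_lt_relIndex_prod_mul_inv_mem (hCK : C.relIndex K ≠ 0) (l : List H)
    (hl : ∀ x ∈ l, x ∈ K) : ∃ l' ⊆ l, l'.length < C.relIndex K ∧ l'.prod * l.prod⁻¹ ∈ C := by
  by_cases hlen : l.length < C.relIndex K
  · exact ⟨l, List.Subset.refl l, hlen, by simp⟩
  obtain ⟨l₁, hl₁l, hshorter, hl₁⟩ :=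
    exists_shorter_prod_mul_inv_mem_of_relIndex_le hCK hl (not_lt.1 hlen)
  obtain ⟨l₂, hl₂l₁, hlen₂, hl₂⟩ :=
    exists_subset_length_lt_relIndex_prod_mul_inv_mem hCK l₁ fun x hx => hl x (hl₁l hx)
  refine ⟨l₂, List.Subset.trans hl₂l₁ hl₁l, hlen₂, ?_⟩
  simpa [mul_assoc] using mul_mem hl₂ hl₁
termination_by l.length
decreasing_by exact hshorter

end Subgroup

namespace TensorNu

open Subgroup

section Conj

variable {K L : Type*} [Group K] [Group L]

theorem comm_eq_commutatorElement (x y : K) : comm x y = ⁅x⁻¹, y⁻¹⁆ := by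
  simp [comm, commutatorElement_def]

theorem map_comm (f : K →* L) (x y : K) : f (comm x y) = comm (f x) (f y) := by
  simp [comm]

theorem map_conj (f : K →* L) (x y : K) : f (conj x y) = conj (f x) (f y) := by
  simp [conj]

theorem conj_mul (t x y : K) : conj t (x * y) = conj (conj t x) y := by
  simp [conj, mul_assoc]

end Conj

variable {G : Type*} [Group G]

theorem ι_mul (g h : G) : ι G (g * h) = ι G g * ι G h :=
  (PresentedGroup.mk_eq_mk_of_mul_inv_mem (Or.inl ⟨g, h, rfl⟩)).symm

theorem ιφ_mul (g h : G) : ιφ G (g * h) = ιφ G g * ιφ G h :=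
  (PresentedGroup.mk_eq_mk_of_mul_inv_mem (Or.inr (Or.inl ⟨g, h, rfl⟩))).symm

theorem ι_inv (g : G) : ι G g⁻¹ = (ι G g)⁻¹ := map_inv (MonoidHom.mk' (ι G) ι_mul) g

theorem ιφ_inv (g : G) : ιφ G g⁻¹ = (ιφ G g)⁻¹ := map_inv (MonoidHom.mk' (ιφ G) ιφ_mul) g

theorem conj_tensor_ι (a b g : G) :
    conj (comm (ι G a) (ιφ G b)) (ι G g) = comm (ι G (conj a g)) (ιφ G (conj b g)) := by
  have := PresentedGroup.mk_eq_mk_of_mul_inv_mem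
    (show _ * _⁻¹ ∈ nuRels G from Or.inr (Or.inr (Or.inl ⟨a, b, g, rfl⟩)))
  rwa [map_conj, map_comm, map_comm] at this

theorem conj_tensor_ιφ (a b g : G) :
    conj (comm (ι G a) (ιφ G b)) (ιφ G g) = conj (comm (ι G a) (ιφ G b)) (ι G g) := by
  have := PresentedGroup.mk_eq_mk_of_mul_inv_mem
    (show _ * _⁻¹ ∈ nuRels G from Or.inr (Or.inr (Or.inr ⟨a, b, g, rfl⟩)))
  rw [map_conj, map_conj, map_comm] at this
  exact this.symm

theorem conj_ι_mem_tensorSet {t : Nu G} (ht : t ∈ tensorSet G) (g : G) :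
    conj t (ι G g) ∈ tensorSet G := by
  obtain ⟨a, b, rfl⟩ := ht
  exact ⟨_, _, conj_tensor_ι a b g⟩

theorem conj_ιφ_mem_tensorSet {t : Nu G} (ht : t ∈ tensorSet G) (g : G) :
    conj t (ιφ G g) ∈ tensorSet G := by
  obtain ⟨a, b, rfl⟩ := ht
  exact conj_tensor_ιφ a b g ▸ conj_ι_mem_tensorSet ⟨a, b, rfl⟩ g

theorem conj_mem_tensorSet {t : Nu G} (ht : t ∈ tensorSet G) (x : Nu G) :
    conj t x ∈ tensorSet G := by
  have hx : x ∈ closure (Set.range PresentedGroup.of) := by simp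
  induction hx using closure_induction_left generalizing t with
  | one => simpa [conj] using ht
  | mul_left y hy z _ ih =>
    rw [conj_mul]
    obtain ⟨g | g, rfl⟩ := hy
    exacts [ih (conj_ι_mem_tensorSet ht g), ih (conj_ιφ_mem_tensorSet ht g)]
  | inv_mul_cancel y hy z _ ih =>
    rw [conj_mul]
    obtain ⟨g | g, rfl⟩ := hy
    · exact ih (ι_inv g ▸ conj_ι_mem_tensorSet ht g⁻¹)
    · exact ih (ιφ_inv g ▸ conj_ιφ_mem_tensorSet ht g⁻¹)

theorem inv_mem_tensorSet {t : Nu G} (ht : t ∈ tensorSet G) : t⁻¹ ∈ tensorSet G := by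
  obtain ⟨a, b, rfl⟩ := ht
  have : (comm (ι G a) (ιφ G b))⁻¹ = conj (comm (ι G a⁻¹) (ιφ G b)) (ι G a) := by
    simp [comm, conj, ι_inv, mul_assoc]
  exact this ▸ conj_mem_tensorSet ⟨a⁻¹, b, rfl⟩ _

instance closure_tensorSet_normal : (closure (tensorSet G)).Normal := by
  refine ⟨fun n hn g => ?_⟩
  induction hn using closure_induction with
  | mem t ht => exact subset_closure (by simpa [conj] using conj_mem_tensorSet ht g⁻¹)
  | one => simp
  | mul x y _ _ hx hy => simpa [mul_assoc] using mul_mem hx hy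
  | inv x _ hx => simpa [mul_assoc] using inv_mem hx

theorem tensorSquare_eq_closure_tensorSet : tensorSquare G = closure (tensorSet G) := by
  refine le_antisymm (commutator_closure_le_of_forall ?_) (closure_le _ |>.2 ?_)
  · rintro _ ⟨a, rfl⟩ _ ⟨b, rfl⟩
    refine subset_closure ⟨a⁻¹, b⁻¹, ?_⟩
    rw [comm_eq_commutatorElement, ι_inv, ιφ_inv, inv_inv, inv_inv]
  · rintro _ ⟨a, b, rfl⟩
    rw [comm_eq_commutatorElement]
    exact commutator_mem_commutator (inv_mem (subset_closure ⟨a, rfl⟩))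
      (inv_mem (subset_closure ⟨b, rfl⟩))

theorem exists_tensor_list_prod_eq {x : Nu G} (hx : x ∈ tensorSquare G) :
    ∃ l : List (Nu G), (∀ t ∈ l, t ∈ tensorSet G) ∧ l.prod = x := by
  rw [tensorSquare_eq_closure_tensorSet, ← mem_toSubmonoid, closure_toSubmonoid,
    Set.union_eq_left.2 fun t ht => inv_inv t ▸ inv_mem_tensorSet ht] at hx
  exact Submonoid.exists_list_of_mem_closure hx

theorem coset_contains_short_element_general (G : Type u) [Group G] (m : ℕ) (hm : 0 < m)
    (C : Subgroup (Nu G)) (hidx : C.relIndex (tensorSquare G) = m) :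
    ∀ b ∈ tensorSquare G, ∃ h : Nu G, (∃ c ∈ C, h = c * b) ∧
      ∃ l : List (Nu G), (∀ t ∈ l, t ∈ tensorSet G) ∧ l.prod = h ∧ l.length ≤ m - 1 := by
  intro b hb
  obtain ⟨l, hl, rfl⟩ := exists_tensor_list_prod_eq hb
  have hlK : ∀ t ∈ l, t ∈ tensorSquare G := fun t ht =>
    tensorSquare_eq_closure_tensorSet (G := G) ▸ subset_closure (hl t ht)
  obtain ⟨l', hl'l, hlen, hC⟩ :=
    exists_subset_length_lt_relIndex_prod_mul_inv_mem (hidx ▸ hm.ne') l hlK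
  exact ⟨l'.prod, ⟨_, hC, by group⟩, l', fun t ht => hl t (hl'l ht), rfl, by omega⟩

/-- If `C` is a subgroup of finite index `m` in `[G,G^φ]`, then every right coset `Cb`,
`b ∈ [G,G^φ]`, contains an element which is a product of at most `m - 1` tensors. -/
theorem coset_contains_short_element (G : Type u) [Group G] (m : ℕ) (hm : 0 < m)
    (C : Subgroup (Nu G)) (hC : C ≤ tensorSquare G)
    (hidx : C.relIndex (tensorSquare G) = m) :
    ∀ b ∈ tensorSquare G, ∃ h : Nu G, (∃ c ∈ C, h = c * b) ∧
      ∃ l : List (Nu G), (∀ t ∈ l, t ∈ tensorSet G) ∧ l.prod = h ∧ l.length ≤ m - 1 :=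
  coset_contains_short_element_general G m hm C hidx

end TensorNu
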